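/- Semantic version of Proposition 3: for agents {p, q, r} with weights w(q,p)=1, w(r,p)=2, w(q,r)=3, w(p,r)=4, all other weights 0, and for every threshold function θ : {p,q,r} → ℝ≥0: if p ∈ {q}* or r ∈ {q}*, then r ∈ {p}* or p ∈ {r}*. -/

import Mathlib

open Classical Finset

/-- Peer pressure of set `A` on agent `b`: `‖A‖_b = Σ_{a∈A} w(a,b)`. -/
noncomputable def pressure {𝒜 : Type*} [Fintype 𝒜] (w : 𝒜 → 𝒜 → ℝ)
    (A : Finset 𝒜) (b : 𝒜) : ℝ :=
  ∑ a ∈ A, w a b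

/-- Diffusion iterates: `A^0 = A`, `A^{k+1} = A^k ∪ {x : ‖A^k‖_x ≥ θ(x)}`. -/
noncomputable def iterAdopt {𝒜 : Type*} [Fintype 𝒜] (w : 𝒜 → 𝒜 → ℝ) (θ : 𝒜 → ℝ)
    (A : Finset 𝒜) : ℕ → Finset 𝒜
  | 0 => A
  | k + 1 => iterAdopt w θ A k ∪
      Finset.univ.filter (fun x => θ x ≤ pressure w (iterAdopt w θ A k) x)

/-- Star closure: `A* = ⋃_{k≥0} A^k`. -/
noncomputable def starAdopt {𝒜 : Type*} [Fintype 𝒜] (w : 𝒜 → 𝒜 → ℝ) (θ : 𝒜 → ℝ)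
    (A : Finset 𝒜) : Finset 𝒜 :=
  Finset.univ.filter (fun x => ∃ k : ℕ, x ∈ iterAdopt w θ A k)

/-!
If `θ r ≤ w(p,r) = 4`, then `p` alone converts `r`; if `θ p ≤ w(r,p) = 2`, then `r` alone
converts `p`. Otherwise `θ r > 4 > w(q,r)` and `θ p > 2 > w(q,p)`, so `{q}` exerts too little
pressure on anyone outside it and `{q}* = {q}`, contradicting the hypothesis.
-/

section Diffusion

variable {𝒜 : Type*} [Fintype 𝒜] (w : 𝒜 → 𝒜 → ℝ) (θ : 𝒜 → ℝ)

theorem pressure_singleton (a b : 𝒜) : pressure w {a} b = w a b := by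
  simp only [pressure, sum_singleton]

theorem mem_starAdopt_iff {A : Finset 𝒜} {x : 𝒜} :
    x ∈ starAdopt w θ A ↔ ∃ k, x ∈ iterAdopt w θ A k := by
  simp only [starAdopt, mem_filter, mem_univ, true_and]

theorem mem_starAdopt_of_le_pressure {A : Finset 𝒜} {x : 𝒜} (hx : θ x ≤ pressure w A x) :
    x ∈ starAdopt w θ A :=
  (mem_starAdopt_iff w θ).2 ⟨1, mem_union_right _ (mem_filter.2 ⟨mem_univ x, hx⟩)⟩

theorem iterAdopt_eq_self_of_closed {A : Finset 𝒜}
    (hA : ∀ x, θ x ≤ pressure w A x → x ∈ A) (k : ℕ) : iterAdopt w θ A k = A := by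
  induction k with
  | zero => rfl
  | succ k ih =>
    rw [iterAdopt, ih, union_eq_left]
    intro x hx
    exact hA x (mem_filter.1 hx).2

theorem starAdopt_eq_self_of_closed {A : Finset 𝒜}
    (hA : ∀ x, θ x ≤ pressure w A x → x ∈ A) : starAdopt w θ A = A := by
  ext x
  simp only [mem_starAdopt_iff, iterAdopt_eq_self_of_closed w θ hA, exists_const]

end Diffusion

theorem stmt18_general (θ : Fin 3 → ℝ)
    (h : (0 : Fin 3) ∈ starAdopt ![![0, 0, 4], ![1, 0, 3], ![2, 0, 0]] θ {1} ∨
         (2 : Fin 3) ∈ starAdopt ![![0, 0, 4], ![1, 0, 3], ![2, 0, 0]] θ {1}) :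
    (2 : Fin 3) ∈ starAdopt ![![0, 0, 4], ![1, 0, 3], ![2, 0, 0]] θ {0} ∨
    (0 : Fin 3) ∈ starAdopt ![![0, 0, 4], ![1, 0, 3], ![2, 0, 0]] θ {2} := by
  set w : Fin 3 → Fin 3 → ℝ := ![![0, 0, 4], ![1, 0, 3], ![2, 0, 0]]
  by_cases hr : θ 2 ≤ 4
  · left
    apply mem_starAdopt_of_le_pressure
    simpa [pressure_singleton, w] using hr
  by_cases hp : θ 0 ≤ 2
  · right
    apply mem_starAdopt_of_le_pressure
    simpa [pressure_singleton, w] using hp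
  have hq_closed : starAdopt w θ {1} = {1} := by
    refine starAdopt_eq_self_of_closed w θ fun x hx => ?_
    rw [pressure_singleton] at hx
    fin_cases x <;> simp [w] at hx ⊢ <;> linarith
  simp [hq_closed] at h

theorem stmt18 (θ : Fin 3 → ℝ) (hθ : ∀ a, 0 ≤ θ a)
    (h : (0 : Fin 3) ∈ starAdopt ![![0, 0, 4], ![1, 0, 3], ![2, 0, 0]] θ {1} ∨
         (2 : Fin 3) ∈ starAdopt ![![0, 0, 4], ![1, 0, 3], ![2, 0, 0]] θ {1}) :
    (2 : Fin 3) ∈ starAdopt ![![0, 0, 4], ![1, 0, 3], ![2, 0, 0]] θ {0} ∨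
    (0 : Fin 3) ∈ starAdopt ![![0, 0, 4], ![1, 0, 3], ![2, 0, 0]] θ {2} :=
  stmt18_general θ h
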